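/- Let n ≥ 1, X ∈ M_n(ℂ) and λ > 0. Then for all ε, δ > 0 and every ξ ∈ M_n(ℂ): 𝓔_X^λ[ξ] ≥ (λ² − ε²)‖Xξ‖_F² + (λ^{-2} − ε^{-2})‖ξX‖_F² + (λ^{-2} − δ²)‖X*ξ‖_F² + (λ² − δ^{-2})‖ξX*‖_F². In particular, taking ε = δ = 1: 𝓔_X^λ[ξ] ≥ (λ² − 1)(‖Xξ‖_F² + ‖ξX*‖_F²) + (λ^{-2} − 1)(‖X*ξ‖_F² + ‖ξX‖_F²). -/
import Mathlib


open Matrix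

/-- Frobenius (Hilbert–Schmidt) inner product `⟨a,b⟩ = Tr(a* b)` on `Mₙ(ℂ)`. -/
noncomputable def finner {n : ℕ} (a b : Matrix (Fin n) (Fin n) ℂ) : ℂ :=
  (aᴴ * b).trace

/-- Frobenius norm `‖a‖_F = √Tr(a* a)` on `Mₙ(ℂ)`. -/
noncomputable def fnorm {n : ℕ} (a : Matrix (Fin n) (Fin n) ℂ) : ℝ :=
  Real.sqrt (finner a a).re

/-- The Dirichlet form `𝓔_X^λ[ξ] = ‖λXξ − λ⁻¹ξX‖_F² + ‖λ⁻¹X*ξ − λξX*‖_F²`. -/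
noncomputable def Elam {n : ℕ} (X : Matrix (Fin n) (Fin n) ℂ) (l : ℝ)
    (ξ : Matrix (Fin n) (Fin n) ℂ) : ℝ :=
  fnorm ((l : ℂ) • (X * ξ) - ((l⁻¹ : ℝ) : ℂ) • (ξ * X)) ^ 2 +
    fnorm (((l⁻¹ : ℝ) : ℂ) • (Xᴴ * ξ) - (l : ℂ) • (ξ * Xᴴ)) ^ 2


lemma finner_self_re_nonneg {n : ℕ} (a : Matrix (Fin n) (Fin n) ℂ) :
    0 ≤ (finner a a).re := by
  unfold finner
  rw [Matrix.trace]
  simp only [Matrix.diag_apply, Matrix.mul_apply, Matrix.conjTranspose_apply]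
  rw [Complex.re_sum]
  refine Finset.sum_nonneg fun i _ => ?_
  rw [Complex.re_sum]
  refine Finset.sum_nonneg fun j _ => ?_
  rw [Complex.star_def, ← Complex.normSq_eq_conj_mul_self]
  exact_mod_cast Complex.normSq_nonneg _

lemma fnorm_sq {n : ℕ} (a : Matrix (Fin n) (Fin n) ℂ) :
    fnorm a ^ 2 = (finner a a).re :=
  Real.sq_sqrt (finner_self_re_nonneg a)

lemma expansion {n : ℕ} (a b : Matrix (Fin n) (Fin n) ℂ) (s t : ℝ) :
    (finner ((s:ℂ) • a - (t:ℂ) • b) ((s:ℂ) • a - (t:ℂ) • b)).re =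
      s ^ 2 * (finner a a).re + t ^ 2 * (finner b b).re
        - 2 * s * t * (finner a b).re := by
  unfold finner
  simp only [Matrix.conjTranspose_sub, Matrix.conjTranspose_smul, Matrix.sub_mul,
    Matrix.mul_sub, Matrix.smul_mul, Matrix.mul_smul, Matrix.trace_sub, Matrix.trace_smul,
    smul_smul, Complex.star_def, Complex.conj_ofReal]
  have hba : (bᴴ * a).trace = star ((aᴴ * b).trace) := by
    rw [← Matrix.trace_conjTranspose, Matrix.conjTranspose_mul,
      Matrix.conjTranspose_conjTranspose]
  rw [hba]
  simp only [smul_eq_mul, Complex.sub_re, Complex.mul_re, Complex.ofReal_re,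
    Complex.ofReal_im, Complex.star_def, Complex.conj_re, Complex.conj_im,
    Complex.mul_im]
  ring

lemma key {n : ℕ} (a b : Matrix (Fin n) (Fin n) ℂ) (l ε : ℝ) (hl : 0 < l) (hε : 0 < ε) :
    fnorm ((l:ℂ) • a - ((l⁻¹ : ℝ):ℂ) • b) ^ 2 ≥
      (l ^ 2 - ε ^ 2) * fnorm a ^ 2 + ((l ^ 2)⁻¹ - (ε ^ 2)⁻¹) * fnorm b ^ 2 := by
  rw [fnorm_sq, fnorm_sq, fnorm_sq, expansion]
  have h2 : 0 ≤ (finner ((ε:ℂ) • a - ((ε⁻¹ : ℝ):ℂ) • b) ((ε:ℂ) • a - ((ε⁻¹ : ℝ):ℂ) • b)).re :=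
    finner_self_re_nonneg _
  rw [expansion] at h2
  have hll : l * l⁻¹ = 1 := mul_inv_cancel₀ hl.ne'
  have hεε : ε * ε⁻¹ = 1 := mul_inv_cancel₀ hε.ne'
  have h1 : (l⁻¹) ^ 2 = (l ^ 2)⁻¹ := by rw [inv_pow]
  have h2' : (ε⁻¹) ^ 2 = (ε ^ 2)⁻¹ := by rw [inv_pow]
  have h3 : 2 * l * l⁻¹ = 2 := by rw [mul_assoc, hll, mul_one]
  have h4 : 2 * ε * ε⁻¹ = 2 := by rw [mul_assoc, hεε, mul_one]
  rw [h1, h3]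
  rw [h2', h4] at h2
  linarith

/-- Coercivity bounds (Theorem 3.2). -/
theorem stmt_8 {n : ℕ} (hn : 1 ≤ n) (X : Matrix (Fin n) (Fin n) ℂ)
    (l : ℝ) (hl : 0 < l) :
    (∀ ε δ : ℝ, 0 < ε → 0 < δ → ∀ ξ : Matrix (Fin n) (Fin n) ℂ,
      Elam X l ξ ≥
        (l ^ 2 - ε ^ 2) * fnorm (X * ξ) ^ 2 +
          ((l ^ 2)⁻¹ - (ε ^ 2)⁻¹) * fnorm (ξ * X) ^ 2 +
          ((l ^ 2)⁻¹ - δ ^ 2) * fnorm (Xᴴ * ξ) ^ 2 +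
          (l ^ 2 - (δ ^ 2)⁻¹) * fnorm (ξ * Xᴴ) ^ 2) ∧
      (∀ ξ : Matrix (Fin n) (Fin n) ℂ,
        Elam X l ξ ≥
          (l ^ 2 - 1) * (fnorm (X * ξ) ^ 2 + fnorm (ξ * Xᴴ) ^ 2) +
            ((l ^ 2)⁻¹ - 1) * (fnorm (Xᴴ * ξ) ^ 2 + fnorm (ξ * X) ^ 2)) := by
  have main : ∀ ε δ : ℝ, 0 < ε → 0 < δ → ∀ ξ : Matrix (Fin n) (Fin n) ℂ,
      Elam X l ξ ≥
        (l ^ 2 - ε ^ 2) * fnorm (X * ξ) ^ 2 +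
          ((l ^ 2)⁻¹ - (ε ^ 2)⁻¹) * fnorm (ξ * X) ^ 2 +
          ((l ^ 2)⁻¹ - δ ^ 2) * fnorm (Xᴴ * ξ) ^ 2 +
          (l ^ 2 - (δ ^ 2)⁻¹) * fnorm (ξ * Xᴴ) ^ 2 := by
    intro ε δ hε hδ ξ
    have h1 := key (X * ξ) (ξ * X) l ε hl hε
    have h2 := key (Xᴴ * ξ) (ξ * Xᴴ) l⁻¹ δ (inv_pos.mpr hl) hδ
    rw [inv_inv, inv_pow, inv_inv] at h2
    unfold Elam
    linarith
  refine ⟨main, fun ξ => ?_⟩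
  have h := main 1 1 one_pos one_pos ξ
  simp only [one_pow, inv_one] at h
  linarith
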